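/- arXiv:math/0007033 — 4 statements merged into one kernel-verified Lean document; each statement's English description precedes it below -/
import Mathlib

section
/- Equivalences of categories are closed under retracts: suppose there is a commutative diagram of functors H : A₁ ⥤ A₃, J : A₃ ⥤ A₁ with H ⋙ J = 𝟭 A₁, H' : A₂ ⥤ A₄, J' : A₄ ⥤ A₂ with H' ⋙ J' = 𝟭 A₂, and F : A₁ ⥤ A₂, G : A₃ ⥤ A₄ with H ⋙ G = F ⋙ H' and G ⋙ J' = J ⋙ F. If G is an equivalence of categories, then F is an equivalence of categories. -/
open CategoryTheory

theorem equivalences_closed_under_retracts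
    {A₁ A₂ A₃ A₄ : Type*} [Category A₁] [Category A₂] [Category A₃] [Category A₄]
    (F : A₁ ⥤ A₂) (G : A₃ ⥤ A₄)
    (H : A₁ ⥤ A₃) (J : A₃ ⥤ A₁) (H' : A₂ ⥤ A₄) (J' : A₄ ⥤ A₂)
    (hHJ : H ⋙ J = 𝟭 A₁) (hH'J' : H' ⋙ J' = 𝟭 A₂)
    (hsq₁ : H ⋙ G = F ⋙ H') (hsq₂ : G ⋙ J' = J ⋙ F)
    (hG : G.IsEquivalence) :
    F.IsEquivalence := by
  haveI := hG
  haveI faith : F.Faithful := by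
    constructor
    intro X Y f g hfg
    have h1 : (F ⋙ H').map f = (F ⋙ H').map g := congrArg H'.map hfg
    rw [← hsq₁] at h1
    have h2 : H.map f = H.map g := G.map_injective h1
    have h3 : (H ⋙ J).map f = (H ⋙ J).map g := congrArg J.map h2
    rw [hHJ] at h3
    simpa using h3
  haveI full : F.Full := by
    constructor
    intro X Y h
    refine ⟨eqToHom (Functor.congr_obj hHJ X).symm ≫
      J.map (G.preimage (eqToHom (Functor.congr_obj hsq₁ X) ≫ H'.map h ≫
        eqToHom (Functor.congr_obj hsq₁ Y).symm)) ≫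
      eqToHom (Functor.congr_obj hHJ Y), ?_⟩
    have key : ∀ {P Q : A₃} (k : P ⟶ Q),
        F.map (J.map k) = eqToHom (Functor.congr_obj hsq₂ P).symm ≫
          J'.map (G.map k) ≫ eqToHom (Functor.congr_obj hsq₂ Q) := by
      intro P Q k
      have := Functor.congr_hom hsq₂ k
      simp only [Functor.comp_map] at this
      rw [this]
      simp
    have key2 : ∀ {P Q : A₂} (k : P ⟶ Q),
        J'.map (H'.map k) = eqToHom (Functor.congr_obj hH'J' P) ≫ k ≫
          eqToHom (Functor.congr_obj hH'J' Q).symm := by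
      intro P Q k
      have := Functor.congr_hom hH'J' k
      simp only [Functor.comp_map, Functor.id_map] at this
      rw [this]
    simp [key, Functor.map_preimage, key2, eqToHom_map]
  haveI essSurj : F.EssSurj := by
    constructor
    intro Y
    exact ⟨J.obj (G.objPreimage (H'.obj Y)),
      ⟨eqToIso (Functor.congr_obj hsq₂ (G.objPreimage (H'.obj Y))).symm ≪≫
      J'.mapIso (G.objObjPreimageIso (H'.obj Y)) ≪≫
      eqToIso (Functor.congr_obj hH'J' Y)⟩⟩
  exact { }
end

section
/- First lifting axiom for Cat: given functors F : A₁ ⥤ A₂, U : A₁ ⥤ A₃, G : A₃ ⥤ A₄, V : A₂ ⥤ A₄ with F ⋙ V = U ⋙ G, where F is injective on objects, F is an equivalence of categories, and G is an isofibration, there exists a functor L : A₂ ⥤ A₃ with F ⋙ L = U and L ⋙ G = V. -/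
open CategoryTheory

/-- A functor is an isofibration if every isomorphism out of an object in its
image lifts strictly. -/
def Isofib {C D : Type*} [Category C] [Category D] (G : C ⥤ D) : Prop :=
  ∀ (x : C) (y : D) (β : G.obj x ≅ y), ∃ (x' : C) (α : x ≅ x') (h : G.obj x' = y),
    G.map α.hom ≫ eqToHom h = β.hom

theorem first_lifting_axiom
    {A₁ A₂ A₃ A₄ : Type*} [Category A₁] [Category A₂] [Category A₃] [Category A₄]
    (F : A₁ ⥤ A₂) (U : A₁ ⥤ A₃) (G : A₃ ⥤ A₄) (V : A₂ ⥤ A₄)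
    (hsq : F ⋙ V = U ⋙ G)
    (hFinj : Function.Injective F.obj) (hFeq : F.IsEquivalence)
    (hG : Isofib G) :
    ∃ L : A₂ ⥤ A₃, F ⋙ L = U ∧ L ⋙ G = V := by
  classical
  let E : A₁ ≌ A₂ := { F.asEquivalence with functor := F }
  have hVF : ∀ z : A₁, V.obj (F.obj z) = G.obj (U.obj z) := fun z => Functor.congr_obj hsq z
  have hEF : E.functor = F := rfl
  have key : ∀ a₂ : A₂, ∃ (x : A₃) (θ : U.obj (E.inverse.obj a₂) ≅ x)
      (hx : G.obj x = V.obj a₂),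
      (G.map θ.hom = eqToHom (hVF _).symm ≫ V.map (E.counit.app a₂) ≫ eqToHom hx.symm) ∧
      (∀ a₁ (h : F.obj a₁ = a₂), ∃ hx' : x = U.obj a₁,
        θ.hom = eqToHom (by subst h; rfl) ≫ U.map (E.unitInv.app a₁) ≫ eqToHom hx'.symm) := by
    intro a₂
    by_cases h : ∃ a₁, F.obj a₁ = a₂
    · obtain ⟨a₁, rfl⟩ := h
      refine ⟨U.obj a₁, U.mapIso ((E.unitIso.app a₁).symm), (hVF a₁).symm, ?_, ?_⟩
      · have hc := Functor.congr_hom hsq (E.unitInv.app a₁)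
        have ht : E.counit.app (F.obj a₁) = F.map (E.unitInv.app a₁) :=
          E.counit_app_functor a₁
        simp only [Iso.symm_hom, Functor.mapIso_hom]
        rw [ht]
        simp only [Functor.comp_map] at hc
        rw [hc]
        simp
      · intro a₁' h'
        obtain rfl := hFinj h'
        exact ⟨rfl, by simp⟩
    · obtain ⟨x', α, hx', hα⟩ := hG (U.obj (E.inverse.obj a₂)) (V.obj a₂)
        (eqToIso (hVF (E.inverse.obj a₂)).symm ≪≫ V.mapIso (E.counitIso.app a₂))
      refine ⟨x', α, hx', ?_, ?_⟩
      · rw [← cancel_mono (eqToHom hx')]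
        simpa using hα
      · intro a₁ h'
        exact absurd ⟨a₁, h'⟩ h
  choose x θ hx hθ hFimg using key
  refine ⟨{ obj := x
            map := fun {a b} f => (θ a).inv ≫ U.map (E.inverse.map f) ≫ (θ b).hom
            map_id := by intro a; simp
            map_comp := by intro a b c f g; simp }, ?_, ?_⟩
  · -- F ⋙ L = U
    refine CategoryTheory.Functor.ext (fun (a₁ : A₁) => (hFimg (F.obj a₁) a₁ rfl).choose) ?_
    intro a b g
    obtain ⟨ha, hθa⟩ := hFimg (F.obj a) a rfl
    obtain ⟨hb, hθb⟩ := hFimg (F.obj b) b rfl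
    have hθa' : (θ (F.obj a)).inv =
        eqToHom ha ≫ U.map (E.unit.app a) ≫ eqToHom (rfl : U.obj _ = _) := by
      rw [← cancel_epi (θ (F.obj a)).hom, Iso.hom_inv_id, hθa]
      simp [← U.map_comp]
      rfl
    have hnat : E.unit.app a ≫ E.inverse.map (F.map g) = g ≫ E.unit.app b :=
      (E.unit.naturality g).symm
    have hub : E.unit.app b ≫ E.unitInv.app b = 𝟙 b := Iso.hom_inv_id_app E.unitIso b
    simp only [Functor.comp_map]
    rw [hθa']; simp only [hθb]
    simp only [eqToHom_refl, Category.comp_id, Category.id_comp, Category.assoc]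
    rw [← U.map_comp_assoc, hnat]
    simp only [Functor.map_comp, Category.assoc]
    rw [← U.map_comp_assoc (E.unit.app b), hub]
    simp
  · -- L ⋙ G = V
    refine CategoryTheory.Functor.ext (fun (a : A₂) => hx a) ?_
    intro a b f
    have hθinv : G.map (θ a).inv =
        eqToHom (hx a) ≫ V.map (E.counitInv.app a) ≫ eqToHom (hVF _) := by
      rw [← cancel_mono (G.map (θ a).hom), ← G.map_comp, Iso.inv_hom_id, hθ a]
      have hca : E.counitInv.app a ≫ E.counit.app a = 𝟙 a := Iso.inv_hom_id_app E.counitIso a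
      simp only [G.map_id, Category.assoc, eqToHom_trans_assoc, eqToHom_refl, Category.id_comp]
      rw [← V.map_comp_assoc, hca]
      simp
    have hUW := Functor.congr_hom hsq (E.inverse.map f)
    simp only [Functor.comp_map] at hUW
    have hGU : G.map (U.map (E.inverse.map f)) =
        eqToHom (hVF _).symm ≫ V.map (F.map (E.inverse.map f)) ≫ eqToHom (hVF _) := by
      rw [hUW]; simp
    have hnat : E.counitInv.app a ≫ F.map (E.inverse.map f) = f ≫ E.counitInv.app b :=
      (E.counitInv.naturality f).symm
    have hcb : E.counitInv.app b ≫ E.counit.app b = 𝟙 b := Iso.inv_hom_id_app E.counitIso b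
    simp only [Functor.comp_map, Functor.map_comp]
    rw [hθinv, hθ b, hGU]
    simp only [Category.assoc, eqToHom_trans_assoc, eqToHom_refl, Category.id_comp]
    rw [← V.map_comp_assoc, hnat]
    simp only [Functor.map_comp, Category.assoc]
    rw [← V.map_comp_assoc (E.counitInv.app b), hcb]
    simp
end

section
/- Second lifting axiom for Cat: given a commutative square F ⋙ V = U ⋙ G of functors where F : A₁ ⥤ A₂ is injective on objects and G : A₃ ⥤ A₄ is both an isofibration and an equivalence of categories with G surjective on objects, there exists a functor L : A₂ ⥤ A₃ with F ⋙ L = U and L ⋙ G = V. -/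
open CategoryTheory

open Classical in
noncomputable def liftObj {A₁ A₂ A₃ A₄ : Type*}
    [Category A₁] [Category A₂] [Category A₃] [Category A₄]
    (F : A₁ ⥤ A₂) (U : A₁ ⥤ A₃) (G : A₃ ⥤ A₄) (V : A₂ ⥤ A₄)
    (hGsurj : Function.Surjective G.obj) (a : A₂) : A₃ :=
  if h : ∃ a₁, F.obj a₁ = a then U.obj h.choose else (hGsurj (V.obj a)).choose

lemma liftObj_spec {A₁ A₂ A₃ A₄ : Type*}
    [Category A₁] [Category A₂] [Category A₃] [Category A₄]
    (F : A₁ ⥤ A₂) (U : A₁ ⥤ A₃) (G : A₃ ⥤ A₄) (V : A₂ ⥤ A₄)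
    (hsq : F ⋙ V = U ⋙ G)
    (hGsurj : Function.Surjective G.obj) (a : A₂) :
    G.obj (liftObj F U G V hGsurj a) = V.obj a := by
  unfold liftObj
  split
  · next h =>
      have h2 := h.choose_spec
      have := Functor.congr_obj hsq h.choose
      simp only [Functor.comp_obj] at this
      rw [← this, h2]
  · exact (hGsurj (V.obj a)).choose_spec

lemma liftObj_F {A₁ A₂ A₃ A₄ : Type*}
    [Category A₁] [Category A₂] [Category A₃] [Category A₄]
    (F : A₁ ⥤ A₂) (U : A₁ ⥤ A₃) (G : A₃ ⥤ A₄) (V : A₂ ⥤ A₄)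
    (hFinj : Function.Injective F.obj)
    (hGsurj : Function.Surjective G.obj) (a₁ : A₁) :
    liftObj F U G V hGsurj (F.obj a₁) = U.obj a₁ := by
  unfold liftObj
  rw [dif_pos ⟨a₁, rfl⟩]
  congr 1
  exact hFinj (⟨a₁, rfl⟩ : ∃ b, F.obj b = F.obj a₁).choose_spec

theorem second_lifting_axiom
    {A₁ A₂ A₃ A₄ : Type*} [Category A₁] [Category A₂] [Category A₃] [Category A₄]
    (F : A₁ ⥤ A₂) (U : A₁ ⥤ A₃) (G : A₃ ⥤ A₄) (V : A₂ ⥤ A₄)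
    (hsq : F ⋙ V = U ⋙ G)
    (hFinj : Function.Injective F.obj)
    (hGfib : Isofib G) (hGeq : G.IsEquivalence)
    (hGsurj : Function.Surjective G.obj) :
    ∃ L : A₂ ⥤ A₃, F ⋙ L = U ∧ L ⋙ G = V := by
  haveI := hGeq
  have spec := liftObj_spec F U G V hsq hGsurj
  let L : A₂ ⥤ A₃ :=
    { obj := liftObj F U G V hGsurj
      map := fun {a b} f =>
        G.preimage (eqToHom (spec a) ≫ V.map f ≫ eqToHom (spec b).symm)
      map_id := fun a => by
        apply G.map_injective
        simp
      map_comp := fun {a b c} f g => by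
        apply G.map_injective
        simp }
  refine ⟨L, ?_, ?_⟩
  · refine CategoryTheory.Functor.ext (fun a₁ => liftObj_F F U G V hFinj hGsurj a₁) ?_
    intro a b f
    apply G.map_injective
    have := Functor.congr_hom hsq f
    simp only [Functor.comp_map] at this
    simp [L, this, eqToHom_map]
  · refine CategoryTheory.Functor.ext (fun a => spec a) ?_
    intro a b f
    simp [L]
end

section
/- First factorization (path object) in Cat: every functor F : A ⥤ B factors as F = K ⋙ G where K is injective on objects and an equivalence of categories, and G is an isofibration. Concretely, let P be the category whose objects are triples (a, β, b) with a an object of A, b an object of B, and β : F a ≅ b, and whose morphisms (a, β, b) → (a', β', b') are morphisms a → a' in A. Then K(a) = (a, id, F a) is a trivial cofibration and G(a, β, b) = b (with G on a morphism γ given by β' ∘ F γ ∘ β⁻¹) is an isofibration, and K ⋙ G = F. -/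
open CategoryTheory

universe v₁ v₂ u₁ u₂

variable {A : Type u₁} [Category.{v₁} A] {B : Type u₂} [Category.{v₂} B]

/-- The path category of a functor `F : A ⥤ B`: objects are triples
`(a, β, b)` with `β : F a ≅ b`; morphisms are morphisms in `A`. -/
structure PathObj (F : A ⥤ B) where
  a : A
  b : B
  iso : F.obj a ≅ b

instance (F : A ⥤ B) : Category (PathObj F) where
  Hom x y := x.a ⟶ y.a
  id x := 𝟙 x.a
  comp f g := f ≫ g

/-- The trivial cofibration `K : A ⥤ P`, `K a = (a, id, F a)`. -/
def pathK (F : A ⥤ B) : A ⥤ PathObj F where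
  obj a := ⟨a, F.obj a, Iso.refl _⟩
  map f := f

/-- The isofibration `G : P ⥤ B`, `G (a, β, b) = b`,
`G γ = β' ∘ F γ ∘ β⁻¹`. -/
def pathG (F : A ⥤ B) : PathObj F ⥤ B where
  obj x := x.b
  map {x y} γ := x.iso.inv ≫ F.map γ ≫ y.iso.hom
  map_id := by intro x; simp [CategoryStruct.id]
  map_comp := by intros x y z f g; simp [CategoryStruct.comp]

/-! Since `pathK F` is the identity on morphisms and every object `(a, β, b)` is isomorphic to
`pathK F a` via `𝟙 a`, `pathK F` is an equivalence. An isomorphism `β' : b ≅ b'` out of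
`pathG F (a, β, b)` lifts to `𝟙 a : (a, β, b) ⟶ (a, β ≪≫ β', b')`, so `pathG F` is an
isofibration. -/

namespace PathObj

variable {F : A ⥤ B}

def isoMk {x y : PathObj F} (e : x.a ≅ y.a) : x ≅ y where
  hom := e.hom
  inv := e.inv
  hom_inv_id := e.hom_inv_id
  inv_hom_id := e.inv_hom_id

end PathObj

variable (F : A ⥤ B)

@[simp]
lemma pathG_map {x y : PathObj F} (γ : x ⟶ y) :
    (pathG F).map γ = x.iso.inv ≫ F.map γ ≫ y.iso.hom := rfl

lemma pathK_comp_pathG : pathK F ⋙ pathG F = F :=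
  CategoryTheory.Functor.ext (fun _ => rfl) fun _ _ f => by
    -- the `eqToHom`s are identities only up to unfolding, which `simp` does not see
    show _ = 𝟙 _ ≫ F.map f ≫ 𝟙 _
    simp [pathK]

lemma pathK_obj_injective : Function.Injective (pathK F).obj :=
  fun _ _ h => congrArg PathObj.a h

instance : (pathK F).Full := ⟨fun {_ _} f => ⟨f, rfl⟩⟩

instance : (pathK F).Faithful := ⟨fun h => h⟩

instance : (pathK F).EssSurj := ⟨fun x => ⟨x.a, ⟨PathObj.isoMk (Iso.refl x.a)⟩⟩⟩

instance : (pathK F).IsEquivalence where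

lemma isofib_pathG : Isofib (pathG F) := fun x y (β : x.b ≅ y) =>
  ⟨⟨x.a, y, x.iso ≪≫ β⟩, PathObj.isoMk (Iso.refl x.a), rfl, by
    simp [PathObj.isoMk]
    exact Category.comp_id _⟩

theorem path_object_factorization (F : A ⥤ B) :
    pathK F ⋙ pathG F = F ∧
    Function.Injective (pathK F).obj ∧
    (pathK F).IsEquivalence ∧
    Isofib (pathG F) :=
  ⟨pathK_comp_pathG F, pathK_obj_injective F, inferInstance, isofib_pathG F⟩
end
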